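/- arXiv:2102.04079 — 5 statements merged into one kernel-verified Lean document; each statement's English description precedes it below -/
import Mathlib

section
/- Let N ≥ 1, p > 1, 0 < γ < min{2, N} and 0 < T < ∞. Then there exists a constant C₁ > 0, depending only on N, p and γ, with the following property: if μ is a nonnegative Radon measure on ℝ^N and u is a solution of the Hardy parabolic equation ∂_t u − Δu = |x|^{-γ} u^p with initial data μ on ℝ^N × [0,T), then for every z ∈ ℝ^N and every σ with 0 < σ < T^{1/2}, one has (⨍_{B(z,σ)} |x|^{γ/(p−1)} dx)^{-1} μ(B(z,σ)) ≤ C₁ σ^{N − 2/(p−1)}. -/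
open MeasureTheory Real
open scoped ENNReal NNReal

/-- The Gaussian heat kernel on `ℝ^N`. -/
noncomputable def G (N : ℕ) (x : EuclideanSpace ℝ (Fin N)) (t : ℝ) : ℝ :=
  (4 * Real.pi * t) ^ (-(N : ℝ) / 2) * Real.exp (-‖x‖ ^ 2 / (4 * t))

/-- The right-hand side of the Duhamel formulation of the Hardy parabolic equation
`∂_t u - Δu = |x|^{-γ} u^p` with a nonnegative Radon measure `μ` as initial data. -/
noncomputable def hardyRHS (N : ℕ) (p γ : ℝ) (μ : Measure (EuclideanSpace ℝ (Fin N)))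
    (u : EuclideanSpace ℝ (Fin N) → ℝ → ℝ) (x : EuclideanSpace ℝ (Fin N)) (t : ℝ) : ℝ≥0∞ :=
  (∫⁻ y, ENNReal.ofReal (G N (x - y) t) ∂μ) +
    ∫⁻ s in Set.Ioo (0 : ℝ) t,
      ∫⁻ y, ENNReal.ofReal (G N (x - y) (t - s) * ‖y‖ ^ (-γ) * u y s ^ p)

/-- `u` is a solution of the Hardy parabolic equation `∂_t u - Δu = |x|^{-γ} u^p`
with initial data the nonnegative Radon measure `μ` on `ℝ^N × [0,T)`. -/
def IsSolution (N : ℕ) (p γ : ℝ) (μ : Measure (EuclideanSpace ℝ (Fin N))) (T : ℝ)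
    (u : EuclideanSpace ℝ (Fin N) → ℝ → ℝ) : Prop :=
  Measurable (Function.uncurry u) ∧ (∀ x t, 0 ≤ u x t) ∧
    ∀ᵐ x ∂(volume : Measure (EuclideanSpace ℝ (Fin N))), ∀ t : ℝ, 0 < t → t < T →
      hardyRHS N p γ μ u x t ≠ ⊤ ∧ ENNReal.ofReal (u x t) = hardyRHS N p γ μ u x t

/-!
Fix the ball `B = B(z, σ)` and put `R = max |z| σ`. On `B` the weight `|y|^{-γ}` is at least
`(2R)^{-γ}`, and `G(w, t) ≳ ρ^{-N}` whenever `t ≤ ρ²` and `|w|² ≤ 16 t`. The linear part of the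
Duhamel formula therefore gives `u ≥ m₀ ≍ σ^{-N} μ(B)` on `B × [σ²/2, σ²]`, and a lower bound
`m_k` on `B × (A_k, σ²]`, fed into the nonlinear part over the time interval `(A_k, A_{k+1})` of
length `σ² 2^{-k-2}`, gives `m_{k+1} ≍ R^{-γ} σ² 2^{-k} m_k^p` on `B × (A_{k+1}, σ²]`. All the
`m_k` are bounded by `u(x₀, σ²) < ∞` for a suitable `x₀ ∈ B`, and a sequence with
`m_{k+1} ≥ c 2^{-k} m_k^p` can only stay bounded if `c^{1/(p-1)} m₀ ≲ 1`. This is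
`μ(B) ≲ R^{γ/(p-1)} σ^{N - 2/(p-1)}`, and `R^{γ/(p-1)}` is dominated by the average of
`|x|^{γ/(p-1)}` over `B` because at least half of `B` lies outside `B(0, R/4)`.
-/

open Metric

lemma exists_ball_subset_ball_inter_ball {E : Type*} [NormedAddCommGroup E] [NormedSpace ℝ E]
    {x z : E} {ρ σ : ℝ} (hx : x ∈ ball z σ) (hρ : 0 < ρ) (hρσ : ρ ≤ σ) :
    ∃ c, ball c (ρ / 2) ⊆ ball x ρ ∩ ball z σ := by
  rw [mem_ball] at hx
  rcases le_or_gt (dist x z) (ρ / 2) with hxz | hxz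
  · refine ⟨z, Set.subset_inter (ball_subset_ball' ?_) (ball_subset_ball (by linarith))⟩
    rw [dist_comm]
    linarith
  · have hd : 0 < dist x z := by linarith
    refine ⟨AffineMap.lineMap x z (ρ / 2 / dist x z), Set.subset_inter
      (ball_subset_ball' ?_) (ball_subset_ball' ?_)⟩
    · rw [dist_lineMap_left, Real.norm_of_nonneg (by positivity), div_mul_cancel₀ _ hd.ne']
      linarith
    · rw [dist_lineMap_right, Real.norm_of_nonneg, sub_mul, div_mul_cancel₀ _ hd.ne']
      · linarith
      · rw [sub_nonneg, div_le_one hd]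
        linarith

lemma le_one_of_bddAbove_rpow_pow {x p : ℝ} (hp : 1 < p)
    (hbdd : BddAbove (Set.range fun k : ℕ => x ^ p ^ k)) : x ≤ 1 := by
  by_contra! h
  obtain ⟨C, hC⟩ := hbdd
  obtain ⟨k, hk⟩ := (((tendsto_rpow_atTop_of_base_gt_one x h).comp
    (tendsto_pow_atTop_atTop_of_one_lt hp)).eventually_gt_atTop C).exists
  exact (hC ⟨k, rfl⟩).not_gt hk

lemma rpow_mul_le_of_bddAbove_of_le_rec {p c : ℝ} (hp : 1 < p) (hc : 0 < c) {m : ℕ → ℝ}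
    (hm0 : 0 ≤ m 0) (hrec : ∀ k, c / 2 ^ k * m k ^ p ≤ m (k + 1))
    (hbdd : BddAbove (Set.range m)) :
    c ^ (1 / (p - 1)) * m 0 ≤ 2 ^ ((1 / (p - 1)) ^ 2) := by
  set a := 1 / (p - 1)
  have ha : a * (p - 1) = 1 := one_div_mul_cancel (by linarith)
  have hm : ∀ k, 0 ≤ m k := by
    intro k
    induction k with
    | zero => exact hm0
    | succ k ih => exact (by positivity : 0 ≤ c / 2 ^ k * m k ^ p).trans (hrec k)
  -- the rescaling `n` turns the recurrence into `n k ^ p ≤ n (k + 1)`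
  set n : ℕ → ℝ := fun k => c ^ a * m k / 2 ^ (a * k + a ^ 2)
  have hcm : ∀ k, 0 ≤ c ^ a * m k := fun k => mul_nonneg (rpow_nonneg hc.le _) (hm k)
  have hn : ∀ k, 0 ≤ n k := fun k => div_nonneg (hcm k) (rpow_nonneg zero_le_two _)
  have hn_step : ∀ k, n k ^ p ≤ n (k + 1) := by
    intro k
    have e₁ : a * p = a + 1 := by linear_combination ha
    have e₂ : (a * k + a ^ 2) * p = a * (k + 1 : ℕ) + a ^ 2 + k := by
      push_cast
      linear_combination (k + a) * ha
    calc n k ^ p = c ^ a * (c / 2 ^ k * m k ^ p) / 2 ^ (a * (k + 1 : ℕ) + a ^ 2) := by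
          simp only [n]
          rw [div_rpow (hcm k) (by positivity), mul_rpow (by positivity) (hm k),
            ← rpow_mul hc.le, ← rpow_mul zero_le_two, e₁, e₂, rpow_add hc, rpow_one,
            rpow_add zero_lt_two, rpow_natCast]
          field_simp
      _ ≤ n (k + 1) := by
          simp only [n]
          gcongr
          exact hrec k
  have hn_pow : ∀ k : ℕ, n 0 ^ p ^ k ≤ n k := by
    intro k
    induction k with
    | zero => simp
    | succ k ih =>
      calc n 0 ^ p ^ (k + 1) = (n 0 ^ p ^ k) ^ p := by rw [pow_succ, rpow_mul (hn 0)]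
        _ ≤ n k ^ p := by gcongr
        _ ≤ n (k + 1) := hn_step k
  obtain ⟨C, hC⟩ := hbdd
  have hn_le : ∀ k, n k ≤ c ^ a * C := fun k =>
    calc n k ≤ c ^ a * m k := div_le_self (hcm k) (one_le_rpow one_le_two (by positivity))
      _ ≤ c ^ a * C := by gcongr; exact hC ⟨k, rfl⟩
  have hn0 : n 0 ≤ 1 := le_one_of_bddAbove_rpow_pow hp
    ⟨c ^ a * C, by rintro _ ⟨k, rfl⟩; exact (hn_pow k).trans (hn_le k)⟩
  simpa [n, div_le_one (by positivity : (0 : ℝ) < 2 ^ (a ^ 2))] using hn0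

lemma exists_dyadic_seq {τ : ℝ} (hτ : 0 < τ) : ∃ A : ℕ → ℝ, A 0 = τ / 2 ∧
    ∀ k, 0 ≤ A k ∧ A k < τ ∧ A (k + 1) - A k = τ / 4 / 2 ^ k := by
  refine ⟨fun k => τ - τ / 2 ^ (k + 1), by ring, fun k => ⟨?_, ?_, ?_⟩⟩
  · rw [sub_nonneg]
    exact div_le_self hτ.le (one_le_pow₀ one_le_two)
  · dsimp only
    linarith [(by positivity : 0 < τ / 2 ^ (k + 1))]
  · dsimp only
    field_simp
    ring

section AddHaar

variable {E : Type*} [NormedAddCommGroup E] [NormedSpace ℝ E] [FiniteDimensional ℝ E]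
  [MeasurableSpace E] [BorelSpace E] [Nontrivial E] (μ : Measure E) [μ.IsAddHaarMeasure]

lemma addHaar_real_ball (x : E) {r : ℝ} (hr : 0 ≤ r) :
    μ.real (ball x r) = r ^ Module.finrank ℝ E * μ.real (ball 0 1) := by
  rw [← Measure.addHaar_real_closedBall_eq_addHaar_real_ball,
    Measure.addHaar_real_closedBall μ x hr]

lemma measureReal_ball_le_two_mul_sdiff_ball_zero (z : E) {σ : ℝ} (hσ : 0 < σ) :
    μ.real (ball z σ) ≤ 2 * μ.real (ball z σ \ ball 0 (max ‖z‖ σ / 4)) := by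
  rcases le_or_gt (2 * σ) ‖z‖ with hz | hz
  · have hdisj : ball z σ \ ball 0 (max ‖z‖ σ / 4) = ball z σ := by
      refine sdiff_eq_self_iff_disjoint.2 (Set.disjoint_left.2 fun y hy0 hyz => ?_)
      rw [mem_ball, dist_eq_norm] at hyz
      rw [mem_ball_zero_iff, max_eq_left (by linarith)] at hy0
      linarith [norm_sub_norm_le z y, norm_sub_rev y z]
    rw [hdisj]
    linarith [measureReal_nonneg (μ := μ) (s := ball z σ)]
  · have hS : ball (0 : E) (max ‖z‖ σ / 4) ⊆ ball 0 (σ / 2) :=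
      ball_subset_ball (by rw [div_le_iff₀ four_pos, max_le_iff]; constructor <;> linarith)
    have hhalf : μ.real (ball (0 : E) (σ / 2)) ≤ μ.real (ball z σ) / 2 := by
      rw [addHaar_real_ball μ _ (by positivity), addHaar_real_ball μ _ hσ.le, div_pow]
      have h2 : (2 : ℝ) ≤ 2 ^ Module.finrank ℝ E :=
        le_self_pow₀ one_le_two Module.finrank_pos.ne'
      have := measureReal_nonneg (μ := μ) (s := ball 0 1)
      rw [div_mul_eq_mul_div, div_le_div_iff₀ (by positivity) two_pos]
      gcongr
    linarith [le_measureReal_sdiff (μ := μ) (s₁ := ball z σ) (s₂ := ball 0 (max ‖z‖ σ / 4)),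
      measureReal_mono (μ := μ) hS]

lemma max_norm_rpow_le_setAverage (z : E) {σ q : ℝ} (hσ : 0 < σ) (hq : 0 ≤ q) :
    max ‖z‖ σ ^ q ≤ 2 * 4 ^ q * ⨍ x in ball z σ, ‖x‖ ^ q ∂μ := by
  set r := max ‖z‖ σ / 4
  have hB : 0 < μ.real (ball z σ) :=
    ENNReal.toReal_pos (measure_ball_pos μ z hσ).ne' measure_ball_lt_top.ne
  have hint : IntegrableOn (fun x : E => ‖x‖ ^ q) (ball z σ) μ :=
    ((continuous_norm.rpow_const fun _ => Or.inr hq).continuousOn.integrableOn_compact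
      (isCompact_closedBall z σ)).mono_set ball_subset_closedBall
  have hlow : r ^ q * μ.real (ball z σ \ ball 0 r) ≤ ∫ x in ball z σ, ‖x‖ ^ q ∂μ :=
    (setIntegral_ge_of_const_le_real (measurableSet_ball.diff measurableSet_ball)
        (measure_lt_top_of_subset Set.sdiff_subset measure_ball_lt_top.ne).ne
        (fun x hx => rpow_le_rpow (by positivity) (by simpa using hx.2) hq)
        (hint.mono_set Set.sdiff_subset)).trans
      (setIntegral_mono_set hint (ae_of_all _ fun x => by positivity)
        Set.sdiff_subset.eventuallyLE)
  have hr : r ^ q * μ.real (ball z σ) ≤ 2 * ∫ x in ball z σ, ‖x‖ ^ q ∂μ := by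
    nlinarith [measureReal_ball_le_two_mul_sdiff_ball_zero μ z hσ,
      (by positivity : (0 : ℝ) ≤ r ^ q)]
  rw [setAverage_eq, smul_eq_mul, show max ‖z‖ σ = 4 * r by ring,
    mul_rpow (by norm_num) (by positivity)]
  calc 4 ^ q * r ^ q = 4 ^ q * (r ^ q * μ.real (ball z σ)) / μ.real (ball z σ) := by
        field_simp
    _ ≤ 4 ^ q * (2 * ∫ x in ball z σ, ‖x‖ ^ q ∂μ) / μ.real (ball z σ) := by gcongr
    _ = _ := by ring

end AddHaar

lemma G_nonneg (N : ℕ) (w : EuclideanSpace ℝ (Fin N)) {t : ℝ} (ht : 0 ≤ t) : 0 ≤ G N w t := by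
  unfold G
  positivity

noncomputable def heatLowerConst (N : ℕ) : ℝ := (4 * π) ^ (-(N : ℝ) / 2) * exp (-4)

lemma heatLowerConst_pos (N : ℕ) : 0 < heatLowerConst N := by
  unfold heatLowerConst
  positivity

lemma heatLowerConst_div_pow_le_G {N : ℕ} {w : EuclideanSpace ℝ (Fin N)} {ρ t : ℝ}
    (hρ : 0 < ρ) (ht : 0 < t) (htρ : t ≤ ρ ^ 2) (hw : ‖w‖ ^ 2 ≤ 16 * t) :
    heatLowerConst N / ρ ^ N ≤ G N w t := by
  have hπ : 0 < 4 * π := by positivity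
  have hpow : (4 * π) ^ (-(N : ℝ) / 2) / ρ ^ N = (4 * π * ρ ^ 2) ^ (-(N : ℝ) / 2) := by
    rw [mul_rpow hπ.le (by positivity), neg_div, rpow_neg (by positivity : (0 : ℝ) ≤ ρ ^ 2),
      ← rpow_natCast ρ 2, ← rpow_mul hρ.le, Nat.cast_ofNat, mul_div_cancel₀ _ two_ne_zero,
      rpow_natCast, div_eq_mul_inv]
  calc heatLowerConst N / ρ ^ N = (4 * π * ρ ^ 2) ^ (-(N : ℝ) / 2) * exp (-4) := by
        rw [heatLowerConst, ← hpow]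
        ring
    _ ≤ G N w t := by
      unfold G
      gcongr ?_ * exp ?_
      · exact rpow_le_rpow_of_nonpos (by positivity) (by gcongr)
          (by rw [neg_div]; exact neg_nonpos.2 (by positivity))
      · rw [neg_div, neg_le_neg_iff, div_le_iff₀ (by positivity)]
        linarith

noncomputable def unitBallVolume (N : ℕ) : ℝ :=
  volume.real (ball (0 : EuclideanSpace ℝ (Fin N)) 1)

lemma unitBallVolume_pos {N : ℕ} [NeZero N] : 0 < unitBallVolume N :=
  ENNReal.toReal_pos (measure_ball_pos _ _ one_pos).ne' measure_ball_lt_top.ne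

noncomputable def duhamelLowerConst (N : ℕ) (γ R : ℝ) : ℝ :=
  heatLowerConst N * unitBallVolume N * (2 * R) ^ (-γ) / 2 ^ N

lemma duhamelLowerConst_pos {N : ℕ} [NeZero N] (γ : ℝ) {R : ℝ} (hR : 0 < R) :
    0 < duhamelLowerConst N γ R := by
  have := heatLowerConst_pos N
  have := unitBallVolume_pos (N := N)
  unfold duhamelLowerConst
  positivity

noncomputable def hardyBallConst (N : ℕ) (p γ : ℝ) : ℝ :=
  2 ^ ((1 / (p - 1)) ^ 2) /
    (heatLowerConst N * (duhamelLowerConst N γ 1 / 4) ^ (1 / (p - 1)))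

lemma hardyBallConst_pos {N : ℕ} [NeZero N] (p γ : ℝ) : 0 < hardyBallConst N p γ := by
  have := heatLowerConst_pos N
  have := duhamelLowerConst_pos (N := N) γ one_pos
  unfold hardyBallConst
  positivity

lemma le_lintegral_G_mul_rpow {N : ℕ} [NeZero N] {γ p M σ r : ℝ} (hγ : 0 ≤ γ) (hp : 0 ≤ p)
    (hM : 0 ≤ M) {x z : EuclideanSpace ℝ (Fin N)} {v : EuclideanSpace ℝ (Fin N) → ℝ}
    (hv : ∀ᵐ y, y ∈ ball z σ → M ≤ v y) (hx : x ∈ ball z σ) (hr : 0 < r) (hrσ : r ≤ σ ^ 2) :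
    ENNReal.ofReal (duhamelLowerConst N γ (max ‖z‖ σ) * M ^ p) ≤
      ∫⁻ y, ENNReal.ofReal (G N (x - y) r * ‖y‖ ^ (-γ) * v y ^ p) := by
  have hσ : 0 < σ := pos_of_mem_ball hx
  set ρ := √r
  have hρ : 0 < ρ := sqrt_pos.2 hr
  have hρ2 : ρ ^ 2 = r := sq_sqrt hr.le
  have hρσ : ρ ≤ σ := by simpa [sqrt_sq hσ.le] using sqrt_le_sqrt hrσ
  obtain ⟨c, hc⟩ := exists_ball_subset_ball_inter_ball hx hρ hρσ
  set a := heatLowerConst N / ρ ^ N * (2 * max ‖z‖ σ) ^ (-γ) * M ^ p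
  have ha : 0 ≤ a := by
    have := heatLowerConst_pos N
    positivity
  have hpt : ∀ᵐ y, y ∈ ball c (ρ / 2) →
      ENNReal.ofReal a ≤ ENNReal.ofReal (G N (x - y) r * ‖y‖ ^ (-γ) * v y ^ p) := by
    filter_upwards [hv, measure_eq_zero_iff_ae_notMem.1 (measure_singleton (μ := volume)
      (0 : EuclideanSpace ℝ (Fin N)))] with y hMy hy0 hy
    obtain ⟨hyx, hyz⟩ := hc hy
    rw [mem_ball, dist_comm, dist_eq_norm] at hyx
    have hG := heatLowerConst_div_pow_le_G (w := x - y) hρ hr hρ2.ge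
      (by nlinarith [norm_nonneg (x - y)])
    have hyR : ‖y‖ ≤ 2 * max ‖z‖ σ := by
      linarith [norm_lt_of_mem_ball hyz, le_max_left (‖z‖) σ, le_max_right (‖z‖) σ]
    have hnorm : (2 * max ‖z‖ σ) ^ (-γ) ≤ ‖y‖ ^ (-γ) :=
      rpow_le_rpow_of_nonpos (norm_pos_iff.2 hy0) hyR (by linarith)
    have hvy : M ^ p ≤ v y ^ p := rpow_le_rpow hM (hMy hyz) hp
    have hGxy := G_nonneg N (x - y) hr.le
    exact ENNReal.ofReal_le_ofReal
      (mul_le_mul (mul_le_mul hG hnorm (by positivity) hGxy) hvy (by positivity) (by positivity))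
  calc ENNReal.ofReal (duhamelLowerConst N γ (max ‖z‖ σ) * M ^ p)
      = ENNReal.ofReal a * volume (ball c (ρ / 2)) := by
        rw [← ofReal_measureReal measure_ball_lt_top.ne, ← ENNReal.ofReal_mul ha,
          addHaar_real_ball volume c (by positivity), finrank_euclideanSpace_fin]
        congr 1
        simp only [a, duhamelLowerConst, unitBallVolume, div_pow]
        field_simp
    _ = ∫⁻ _ in ball c (ρ / 2), ENNReal.ofReal a := (setLIntegral_const _ _).symm
    _ ≤ ∫⁻ y in ball c (ρ / 2), ENNReal.ofReal (G N (x - y) r * ‖y‖ ^ (-γ) * v y ^ p) :=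
        setLIntegral_mono_ae' measurableSet_ball hpt
    _ ≤ _ := setLIntegral_le_lintegral _ _

namespace IsSolution

variable {N : ℕ} {p γ T : ℝ} {μ : Measure (EuclideanSpace ℝ (Fin N))}
  {u : EuclideanSpace ℝ (Fin N) → ℝ → ℝ}

lemma ae_lintegral_G_le (hu : IsSolution N p γ μ T u) :
    ∀ᵐ x, ∀ t, 0 < t → t < T →
      ∫⁻ y, ENNReal.ofReal (G N (x - y) t) ∂μ ≤ ENNReal.ofReal (u x t) :=
  hu.2.2.mono fun _ hx t ht htT => (hx t ht htT).2 ▸ le_self_add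

lemma ae_lintegral_duhamel_le (hu : IsSolution N p γ μ T u) :
    ∀ᵐ x, ∀ t, 0 < t → t < T →
      ∫⁻ s in Set.Ioo 0 t, ∫⁻ y, ENNReal.ofReal (G N (x - y) (t - s) * ‖y‖ ^ (-γ) * u y s ^ p)
        ≤ ENNReal.ofReal (u x t) :=
  hu.2.2.mono fun _ hx t ht htT => (hx t ht htT).2 ▸ le_add_self

lemma ae_lowerBound_initial (hu : IsSolution N p γ μ T u) {z : EuclideanSpace ℝ (Fin N)}
    {σ : ℝ} (hσT : σ ^ 2 < T) :
    ∀ᵐ x, x ∈ ball z σ → ∀ t, σ ^ 2 / 4 ≤ t → t ≤ σ ^ 2 →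
      heatLowerConst N / σ ^ N * (μ (ball z σ)).toReal ≤ u x t := by
  filter_upwards [hu.ae_lintegral_G_le] with x hx hxB t ht₁ ht₂
  have hσ : 0 < σ := pos_of_mem_ball hxB
  have ht : 0 < t := lt_of_lt_of_le (by positivity) ht₁
  rw [← ENNReal.ofReal_le_ofReal_iff (hu.2.1 x t)]
  calc ENNReal.ofReal (heatLowerConst N / σ ^ N * (μ (ball z σ)).toReal)
      ≤ ENNReal.ofReal (heatLowerConst N / σ ^ N) * μ (ball z σ) := by
        rw [ENNReal.ofReal_mul (div_nonneg (heatLowerConst_pos N).le (by positivity))]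
        gcongr
        exact ENNReal.ofReal_toReal_le
    _ = ∫⁻ _ in ball z σ, ENNReal.ofReal (heatLowerConst N / σ ^ N) ∂μ :=
        (setLIntegral_const _ _).symm
    _ ≤ ∫⁻ y in ball z σ, ENNReal.ofReal (G N (x - y) t) ∂μ := by
        refine setLIntegral_mono' measurableSet_ball fun y hy => ENNReal.ofReal_le_ofReal ?_
        have hxy : ‖x - y‖ < 2 * σ := by
          rw [← dist_eq_norm]
          linarith [dist_triangle_right x y z, mem_ball.1 hxB, mem_ball.1 hy]
        exact heatLowerConst_div_pow_le_G hσ ht ht₂ (by nlinarith [norm_nonneg (x - y)])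
    _ ≤ ∫⁻ y, ENNReal.ofReal (G N (x - y) t) ∂μ := setLIntegral_le_lintegral _ _
    _ ≤ ENNReal.ofReal (u x t) := hx t ht (ht₂.trans_lt hσT)

lemma ae_lowerBound_step [NeZero N] (hu : IsSolution N p γ μ T u) (hp : 0 ≤ p) (hγ : 0 ≤ γ)
    {z : EuclideanSpace ℝ (Fin N)} {σ a b M : ℝ} (hσT : σ ^ 2 < T) (ha : 0 ≤ a) (hab : a ≤ b)
    (hM : 0 ≤ M) (hlow : ∀ᵐ y, y ∈ ball z σ → ∀ s, a < s → s ≤ σ ^ 2 → M ≤ u y s) :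
    ∀ᵐ x, x ∈ ball z σ → ∀ t, b < t → t ≤ σ ^ 2 →
      duhamelLowerConst N γ (max ‖z‖ σ) * M ^ p * (b - a) ≤ u x t := by
  filter_upwards [hu.ae_lintegral_duhamel_le] with x hx hxB t hbt ht
  set c := duhamelLowerConst N γ (max ‖z‖ σ) * M ^ p
  have hc : 0 ≤ c := by
    have := duhamelLowerConst_pos (N := N) γ ((pos_of_mem_ball hxB).trans_le (le_max_right (‖z‖) σ))
    positivity
  rw [← ENNReal.ofReal_le_ofReal_iff (hu.2.1 x t)]
  calc ENNReal.ofReal (c * (b - a)) = ∫⁻ _ in Set.Ioo a b, ENNReal.ofReal c := by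
        rw [setLIntegral_const, Real.volume_Ioo, ENNReal.ofReal_mul hc]
    _ ≤ ∫⁻ s in Set.Ioo a b,
          ∫⁻ y, ENNReal.ofReal (G N (x - y) (t - s) * ‖y‖ ^ (-γ) * u y s ^ p) :=
        setLIntegral_mono' measurableSet_Ioo fun s hs =>
          le_lintegral_G_mul_rpow hγ hp hM
            (hlow.mono fun y hy hyB => hy hyB s hs.1 (by linarith [hs.2])) hxB
            (by linarith [hs.2]) (by linarith [hs.1])
    _ ≤ ∫⁻ s in Set.Ioo 0 t,
          ∫⁻ y, ENNReal.ofReal (G N (x - y) (t - s) * ‖y‖ ^ (-γ) * u y s ^ p) :=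
        lintegral_mono_set (Set.Ioo_subset_Ioo ha hbt.le)
    _ ≤ ENNReal.ofReal (u x t) := hx t (by linarith) (by linarith)

lemma exists_bddAbove_lowerBounds [NeZero N] (hu : IsSolution N p γ μ T u) (hp : 0 ≤ p)
    (hγ : 0 ≤ γ) (z : EuclideanSpace ℝ (Fin N)) {σ : ℝ} (hσ : 0 < σ) (hσT : σ ^ 2 < T) :
    ∃ m : ℕ → ℝ, m 0 = heatLowerConst N / σ ^ N * (μ (ball z σ)).toReal ∧
      (∀ k, duhamelLowerConst N γ (max ‖z‖ σ) * σ ^ 2 / 4 / 2 ^ k * m k ^ p ≤ m (k + 1)) ∧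
      BddAbove (Set.range m) := by
  set c := duhamelLowerConst N γ (max ‖z‖ σ)
  have hc : 0 < c := duhamelLowerConst_pos γ (lt_max_of_lt_right hσ)
  obtain ⟨A, hA0, hA⟩ := exists_dyadic_seq (sq_pos_of_pos hσ)
  obtain ⟨m, hm0, hm⟩ : ∃ m : ℕ → ℝ, m 0 = heatLowerConst N / σ ^ N * (μ (ball z σ)).toReal ∧
      ∀ k, m (k + 1) = c * m k ^ p * (A (k + 1) - A k) :=
    ⟨fun k => Nat.rec (heatLowerConst N / σ ^ N * (μ (ball z σ)).toReal)
      (fun k mk => c * mk ^ p * (A (k + 1) - A k)) k, rfl, fun _ => rfl⟩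
  have hm_nonneg : ∀ k, 0 ≤ m k := by
    intro k
    induction k with
    | zero =>
      have := heatLowerConst_pos N
      rw [hm0]
      positivity
    | succ k ih =>
      rw [hm, (hA k).2.2]
      positivity
  have hlower : ∀ k, ∀ᵐ x, x ∈ ball z σ → ∀ t, A k < t → t ≤ σ ^ 2 → m k ≤ u x t := by
    intro k
    induction k with
    | zero =>
      filter_upwards [hu.ae_lowerBound_initial hσT] with x hx hxB t ht₁ ht₂
      rw [hm0]
      exact hx hxB t (by linarith) ht₂
    | succ k ih =>
      have hA_le : A k ≤ A (k + 1) := by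
        linarith [(hA k).2.2, (by positivity : 0 ≤ σ ^ 2 / 4 / 2 ^ k)]
      filter_upwards [hu.ae_lowerBound_step hp hγ hσT (hA k).1 hA_le (hm_nonneg k) ih]
        with x hx
      rwa [hm]
  have : (ae (volume.restrict (ball z σ))).NeBot :=
    ae_restrict_neBot.2 (measure_ball_pos _ _ hσ).ne'
  obtain ⟨x₀, hx₀⟩ := ((ae_restrict_iff' measurableSet_ball).2 ((ae_all_iff.2 hlower).mono
    fun x hx hxB k => hx k hxB (σ ^ 2) (hA k).2.1 le_rfl)).exists
  refine ⟨m, hm0, fun k => ?_, ⟨u x₀ (σ ^ 2), by rintro _ ⟨k, rfl⟩; exact hx₀ k⟩⟩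
  rw [hm, (hA k).2.2]
  exact le_of_eq (by ring)

lemma toReal_measure_ball_le [NeZero N] (hu : IsSolution N p γ μ T u) (hp : 1 < p)
    (hγ : 0 ≤ γ) (z : EuclideanSpace ℝ (Fin N)) {σ : ℝ} (hσ : 0 < σ) (hσT : σ ^ 2 < T) :
    (μ (ball z σ)).toReal ≤
      hardyBallConst N p γ * max ‖z‖ σ ^ (γ / (p - 1)) * σ ^ ((N : ℝ) - 2 / (p - 1)) := by
  obtain ⟨m, hm0, hrec, hbdd⟩ := hu.exists_bddAbove_lowerBounds (by linarith) hγ z hσ hσT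
  set R := max ‖z‖ σ
  have hR : 0 < R := lt_max_of_lt_right hσ
  set κ := heatLowerConst N
  have hκ : 0 < κ := heatLowerConst_pos N
  set K := duhamelLowerConst N γ 1 / 4
  have hK : 0 < K := by
    have := duhamelLowerConst_pos (N := N) γ one_pos
    positivity
  have hc : duhamelLowerConst N γ R * σ ^ 2 / 4 = K * σ ^ 2 / R ^ γ := by
    simp only [K, duhamelLowerConst]
    rw [mul_rpow zero_le_two hR.le, rpow_neg hR.le, mul_one]
    field_simp
  have key := rpow_mul_le_of_bddAbove_of_le_rec hp
    (by positivity [duhamelLowerConst_pos (N := N) γ hR]) (hm0 ▸ by positivity) hrec hbdd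
  rw [hc, div_rpow (by positivity) (by positivity), mul_rpow hK.le (by positivity),
    ← rpow_natCast σ 2, ← rpow_mul hσ.le, ← rpow_mul hR.le, hm0, Nat.cast_ofNat,
    mul_one_div, mul_one_div] at key
  have hconst : hardyBallConst N p γ = 2 ^ ((1 / (p - 1)) ^ 2) / (κ * K ^ (1 / (p - 1))) := rfl
  rw [rpow_sub hσ, rpow_natCast, hconst]
  set X := K ^ (1 / (p - 1)) * σ ^ (2 / (p - 1)) / R ^ (γ / (p - 1))
  have hX : 0 < X := by positivity
  calc (μ (ball z σ)).toReal
      = X * (κ / σ ^ N * (μ (ball z σ)).toReal) * (σ ^ N / (κ * X)) := by field_simp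
    _ ≤ 2 ^ ((1 / (p - 1)) ^ 2) * (σ ^ N / (κ * X)) := by gcongr
    _ = _ := by
      simp only [X]
      field_simp

end IsSolution

theorem statement0_general (N : ℕ) (hN : 1 ≤ N) (p γ : ℝ) (hp : 1 < p)
    (hγ0 : 0 < γ) :
    ∃ C₁ : ℝ, 0 < C₁ ∧
      ∀ T : ℝ, 0 < T →
      ∀ μ : Measure (EuclideanSpace ℝ (Fin N)), IsLocallyFiniteMeasure μ →
      ∀ u : EuclideanSpace ℝ (Fin N) → ℝ → ℝ, IsSolution N p γ μ T u →
      ∀ (z : EuclideanSpace ℝ (Fin N)) (σ : ℝ), 0 < σ → σ < Real.sqrt T →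
        ENNReal.ofReal ((⨍ x in Metric.ball z σ, ‖x‖ ^ (γ / (p - 1)))⁻¹) *
            μ (Metric.ball z σ)
          ≤ ENNReal.ofReal (C₁ * σ ^ ((N : ℝ) - 2 / (p - 1))) := by
  have : NeZero N := ⟨by omega⟩
  have hq : 0 ≤ γ / (p - 1) := div_nonneg hγ0.le (by linarith)
  have hC := hardyBallConst_pos (N := N) p γ
  refine ⟨2 * 4 ^ (γ / (p - 1)) * hardyBallConst N p γ, by positivity, ?_⟩
  intro T _ μ _ u hu z σ hσ hσT
  set avg := ⨍ x in ball z σ, ‖x‖ ^ (γ / (p - 1))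
  have havg := max_norm_rpow_le_setAverage volume z hσ hq
  have havg_pos : 0 < avg := by
    have : 0 < max ‖z‖ σ ^ (γ / (p - 1)) := rpow_pos_of_pos (lt_max_of_lt_right hσ) _
    nlinarith [(by positivity : (0 : ℝ) < 2 * 4 ^ (γ / (p - 1)))]
  have hμB := hu.toReal_measure_ball_le hp hγ0.le z hσ ((lt_sqrt hσ.le).1 hσT)
  rw [← ENNReal.ofReal_toReal measure_ball_lt_top.ne,
    ← ENNReal.ofReal_mul (inv_nonneg.2 havg_pos.le)]
  refine ENNReal.ofReal_le_ofReal ?_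
  calc avg⁻¹ * (μ (ball z σ)).toReal
      ≤ avg⁻¹ * (hardyBallConst N p γ * (2 * 4 ^ (γ / (p - 1)) * avg) *
          σ ^ ((N : ℝ) - 2 / (p - 1))) := by
        grw [hμB, havg]
    _ = _ := by field_simp

/-- Theorem 1.1, inequality (1.5), case θ = 2.
If `u` solves the Hardy parabolic equation with initial data `μ` on `ℝ^N × [0,T)`, then
`(⨍_{B(z,σ)} |x|^{γ/(p-1)} dx)⁻¹ μ(B(z,σ)) ≤ C₁ σ^{N - 2/(p-1)}` for `0 < σ < √T`. -/
theorem statement0 (N : ℕ) (hN : 1 ≤ N) (p γ : ℝ) (hp : 1 < p)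
    (hγ0 : 0 < γ) (hγ2 : γ < 2) (hγN : γ < N) :
    ∃ C₁ : ℝ, 0 < C₁ ∧
      ∀ T : ℝ, 0 < T →
      ∀ μ : Measure (EuclideanSpace ℝ (Fin N)), IsLocallyFiniteMeasure μ →
      ∀ u : EuclideanSpace ℝ (Fin N) → ℝ → ℝ, IsSolution N p γ μ T u →
      ∀ (z : EuclideanSpace ℝ (Fin N)) (σ : ℝ), 0 < σ → σ < Real.sqrt T →
        ENNReal.ofReal ((⨍ x in Metric.ball z σ, ‖x‖ ^ (γ / (p - 1)))⁻¹) *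
            μ (Metric.ball z σ)
          ≤ ENNReal.ofReal (C₁ * σ ^ ((N : ℝ) - 2 / (p - 1))) :=
  statement0_general N hN p γ hp hγ0
end

section
/- Let N ≥ 1 and 0 < γ < min{2, N}. (i) If p ≥ p_γ := 1 + (2−γ)/N and μ = δ₀ is the Dirac measure concentrated at the origin, then for every T > 0 there is no solution of the Hardy parabolic equation ∂_t u − Δu = |x|^{-γ} u^p with initial data μ on ℝ^N × [0,T). (ii) If p ≥ p₀ := 1 + 2/N, z ∈ ℝ^N, and μ = δ_z is the Dirac measure concentrated at z, then for every T > 0 there is no solution of the Hardy parabolic equation ∂_t u − Δu = |x|^{-γ} u^p with initial data μ on ℝ^N × [0,T). -/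
/-!
A solution with initial data `δ_z` dominates the free solution: `u(y, s) ≥ G(y - z, s)`, since the
Duhamel term is nonnegative. On the parabolic ball `|y - z| < √s` this gives `u(y, s)^p ≳ s^{-Np/2}`
on a set of volume `≍ s^{N/2}`, and there `|y|^{-γ} ≳ s^{-β/2}`, with `β = γ` when `z = 0` and
`β = 0` in general. Feeding this back into the Duhamel formula at a fixed `(x₀, t)` bounds its
nonlinear term below by `∫₀ s^{-(N(p-1)+β)/2} ds`, which diverges exactly when
`N(p-1) + β ≥ 2`, i.e. `p ≥ p_γ` resp. `p ≥ p₀`; the formula then cannot be finite.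
-/

open MeasureTheory Real
open scoped ENNReal NNReal

open Metric Set

section

variable {N : ℕ}

lemma G_ge_of_norm_le {x : EuclideanSpace ℝ (Fin N)} {M τ t' t : ℝ} (hτ : 0 < τ) (hτt' : τ ≤ t')
    (ht't : t' ≤ t) (hx : ‖x‖ ≤ M) :
    (4 * π * t) ^ (-(N : ℝ) / 2) * exp (-M ^ 2 / (4 * τ)) ≤ G N x t' := by
  have := pi_pos
  have hN : -(N : ℝ) / 2 ≤ 0 := by have := N.cast_nonneg (α := ℝ); linarith
  refine mul_le_mul ?_ ?_ (exp_nonneg _) (rpow_nonneg (by nlinarith) _)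
  · exact rpow_le_rpow_of_nonpos (by nlinarith) (by nlinarith) hN
  · rw [exp_le_exp, neg_div, neg_div, neg_le_neg_iff]
    exact div_le_div₀ (by positivity) (pow_le_pow_left₀ (norm_nonneg _) hx 2) (by positivity)
      (by linarith)

lemma G_ge_of_norm_le_sqrt {x : EuclideanSpace ℝ (Fin N)} {s : ℝ} (hs : 0 < s) (hx : ‖x‖ ≤ √s) :
    (4 * π * s) ^ (-(N : ℝ) / 2) * exp (-(1 / 4)) ≤ G N x s := by
  have h := G_ge_of_norm_le (N := N) hs le_rfl le_rfl hx
  rwa [sq_sqrt hs.le, show -s / (4 * s) = -(1 / 4) by field_simp] at h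

end

lemma ofReal_mul_volume_ball_le_lintegral {E : Type*} [NormedAddCommGroup E] [NormedSpace ℝ E]
    [FiniteDimensional ℝ E] [MeasurableSpace E] [BorelSpace E] (μ : Measure E)
    [μ.IsAddHaarMeasure] {f : E → ℝ} {z : E} {r m : ℝ} (hr : 0 < r)
    (hf : ∀ᵐ y ∂μ, y ∈ ball z r → m ≤ f y) :
    ENNReal.ofReal (m * r ^ Module.finrank ℝ E) * μ (ball 0 1) ≤ ∫⁻ y, ENNReal.ofReal (f y) ∂μ :=
  calc ENNReal.ofReal (m * r ^ Module.finrank ℝ E) * μ (ball 0 1)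
      = ∫⁻ _ in ball z r, ENNReal.ofReal m ∂μ := by
        rw [setLIntegral_const, Measure.addHaar_ball_of_pos μ z hr,
          ENNReal.ofReal_mul' (by positivity), mul_assoc]
    _ ≤ ∫⁻ y in ball z r, ENNReal.ofReal (f y) ∂μ :=
        setLIntegral_mono_ae' measurableSet_ball
          (hf.mono fun y hy hyB => ENNReal.ofReal_le_ofReal (hy hyB))
    _ ≤ ∫⁻ y, ENNReal.ofReal (f y) ∂μ := setLIntegral_le_lintegral _ _

lemma lintegral_Ioo_rpow_neg_eq_top {a ε : ℝ} (ha : 1 ≤ a) (hε : 0 < ε) :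
    ∫⁻ s in Ioo 0 ε, ENNReal.ofReal (s ^ (-a)) = ⊤ := by
  by_contra h
  have hint : IntegrableOn (fun s : ℝ => s ^ (-a)) (Ioo 0 ε) := by
    refine ⟨(continuousOn_id.rpow_const fun s hs => Or.inl hs.1.ne').aestronglyMeasurable
      measurableSet_Ioo, ?_⟩
    rw [hasFiniteIntegral_iff_ofReal
      (ae_restrict_of_forall_mem measurableSet_Ioo fun s hs => rpow_nonneg hs.1.le _)]
    exact lt_top_iff_ne_top.2 h
  linarith [(intervalIntegral.integrableOn_Ioo_rpow_iff hε).1 hint]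

lemma rpow_mul_heat_lower_bound_rpow_mul_sqrt_pow {N : ℕ} {p β s : ℝ} (hs : 0 < s) :
    s ^ (-(β / 2)) * ((4 * π * s) ^ (-(N : ℝ) / 2) * exp (-(1 / 4))) ^ p * √s ^ N
      = ((4 * π) ^ (-(N : ℝ) / 2) * exp (-(1 / 4))) ^ p * s ^ (-((N * (p - 1) + β) / 2)) := by
  have h4π : 0 < 4 * π := by positivity
  have hsplit : (4 * π * s) ^ (-(N : ℝ) / 2) * exp (-(1 / 4))
      = ((4 * π) ^ (-(N : ℝ) / 2) * exp (-(1 / 4))) * s ^ (-(N : ℝ) / 2) := by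
    rw [mul_rpow h4π.le hs.le]; ring
  rw [hsplit, mul_rpow (by positivity) (by positivity), ← rpow_mul hs.le, sqrt_eq_rpow,
    ← rpow_natCast, ← rpow_mul hs.le,
    show -((N * (p - 1) + β) / 2) = -(β / 2) + (-(N : ℝ) / 2 * p + 1 / 2 * N) by ring,
    rpow_add hs, rpow_add hs]
  ring

section

variable {N : ℕ} [NeZero N] {p γ β c : ℝ} {z : EuclideanSpace ℝ (Fin N)}
  {u : EuclideanSpace ℝ (Fin N) → ℝ → ℝ}

lemma le_lintegral_of_heat_lower_bound {k : EuclideanSpace ℝ (Fin N) → ℝ} {K s : ℝ}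
    (hp : 0 ≤ p) (hc : 0 ≤ c) (hK : 0 ≤ K) (hs : 0 < s) (hk : ∀ y, dist y z < √s → K ≤ k y)
    -- `y ≠ 0` since `‖0‖ ^ (-γ) = 0` for `Real.rpow`; the origin is a null set anyway.
    (hweight : ∀ y, dist y z < √s → y ≠ 0 → c * s ^ (-(β / 2)) ≤ ‖y‖ ^ (-γ))
    (hu : ∀ᵐ y, G N (y - z) s ≤ u y s) :
    ENNReal.ofReal (K * c * ((4 * π) ^ (-(N : ℝ) / 2) * exp (-(1 / 4))) ^ p
        * s ^ (-((N * (p - 1) + β) / 2))) * volume (ball (0 : EuclideanSpace ℝ (Fin N)) 1)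
      ≤ ∫⁻ y, ENNReal.ofReal (k y * ‖y‖ ^ (-γ) * u y s ^ p) := by
  have := pi_pos
  set F := (4 * π * s) ^ (-(N : ℝ) / 2) * exp (-(1 / 4))
  have hpoint : ∀ᵐ y, y ∈ ball z √s →
      K * (c * s ^ (-(β / 2))) * F ^ p ≤ k y * ‖y‖ ^ (-γ) * u y s ^ p := by
    filter_upwards [hu, compl_mem_ae_iff.2 (measure_singleton 0)] with y hyu hy0 hyB
    have hG : F ≤ G N (y - z) s := G_ge_of_norm_le_sqrt hs (by rw [← dist_eq_norm]; exact hyB.le)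
    have hky := hk y hyB
    have hky0 := hK.trans hky
    exact mul_le_mul (mul_le_mul hky (hweight y hyB hy0) (by positivity) hky0)
      (rpow_le_rpow (by positivity) (hG.trans hyu) hp) (by positivity) (by positivity)
  have hscale : K * (c * s ^ (-(β / 2))) * F ^ p * √s ^ Module.finrank ℝ (EuclideanSpace ℝ (Fin N))
      = K * c * ((4 * π) ^ (-(N : ℝ) / 2) * exp (-(1 / 4))) ^ p
        * s ^ (-((N * (p - 1) + β) / 2)) := by
    rw [finrank_euclideanSpace_fin]
    linear_combination
      (K * c) * rpow_mul_heat_lower_bound_rpow_mul_sqrt_pow (N := N) (p := p) (β := β) hs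
  rw [← hscale]
  exact ofReal_mul_volume_ball_le_lintegral volume (sqrt_pos.2 hs) hpoint

lemma lintegral_duhamel_eq_top (x₀ : EuclideanSpace ℝ (Fin N)) {t : ℝ} (hp : 0 ≤ p) (hc : 0 < c)
    (hcrit : 2 ≤ N * (p - 1) + β) (ht : 0 < t)
    (hweight : ∀ s ∈ Ioo 0 t, ∀ y, dist y z < √s → y ≠ 0 → c * s ^ (-(β / 2)) ≤ ‖y‖ ^ (-γ))
    (hu : ∀ᵐ y, ∀ s, 0 < s → s < t → G N (y - z) s ≤ u y s) :
    ∫⁻ s in Ioo 0 t, ∫⁻ y, ENNReal.ofReal (G N (x₀ - y) (t - s) * ‖y‖ ^ (-γ) * u y s ^ p) = ⊤ := by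
  have := pi_pos
  set M := ‖x₀ - z‖ + √(t / 2)
  set K := (4 * π * t) ^ (-(N : ℝ) / 2) * exp (-M ^ 2 / (4 * (t / 2)))
  set C := K * c * ((4 * π) ^ (-(N : ℝ) / 2) * exp (-(1 / 4))) ^ p
  set a := (N * (p - 1) + β) / 2
  set V := volume (ball (0 : EuclideanSpace ℝ (Fin N)) 1)
  have hC : 0 < C := by positivity
  have hV : V ≠ 0 := (measure_ball_pos volume _ one_pos).ne'
  have hCV : ENNReal.ofReal C * V ≠ ⊤ :=
    ENNReal.mul_ne_top ENNReal.ofReal_ne_top measure_ball_lt_top.ne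
  have hslice : ∀ s ∈ Ioo 0 (t / 2), ENNReal.ofReal (C * s ^ (-a)) * V
      ≤ ∫⁻ y, ENNReal.ofReal (G N (x₀ - y) (t - s) * ‖y‖ ^ (-γ) * u y s ^ p) := by
    rintro s ⟨hs0, hst⟩
    refine le_lintegral_of_heat_lower_bound hp hc.le (by positivity) hs0 (fun y hy => ?_)
      (hweight s ⟨hs0, by linarith⟩) (hu.mono fun y hy => hy s hs0 (by linarith))
    refine G_ge_of_norm_le (by positivity) (by linarith) (by linarith) ?_
    calc ‖x₀ - y‖ = dist x₀ y := (dist_eq_norm _ _).symm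
      _ ≤ dist x₀ z + dist y z := dist_triangle_right _ _ _
      _ ≤ M := by
        rw [dist_eq_norm]
        linarith [sqrt_le_sqrt hst.le (x := s)]
  refine top_le_iff.1 ?_
  calc ⊤ = ENNReal.ofReal C * V * ∫⁻ s in Ioo 0 (t / 2), ENNReal.ofReal (s ^ (-a)) := by
        rw [lintegral_Ioo_rpow_neg_eq_top (by dsimp only [a]; linarith) (by positivity),
          ENNReal.mul_top (mul_ne_zero (ENNReal.ofReal_pos.2 hC).ne' hV)]
    _ = ∫⁻ s in Ioo 0 (t / 2), ENNReal.ofReal (C * s ^ (-a)) * V := by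
        rw [← lintegral_const_mul' _ _ hCV]
        exact lintegral_congr fun s => by rw [ENNReal.ofReal_mul hC.le]; ring
    _ ≤ ∫⁻ s in Ioo 0 (t / 2),
          ∫⁻ y, ENNReal.ofReal (G N (x₀ - y) (t - s) * ‖y‖ ^ (-γ) * u y s ^ p) :=
        setLIntegral_mono' measurableSet_Ioo hslice
    _ ≤ _ := lintegral_mono_set (Ioo_subset_Ioo_right (by linarith))

end

section

variable {N : ℕ} {p γ T : ℝ} {z : EuclideanSpace ℝ (Fin N)} {u : EuclideanSpace ℝ (Fin N) → ℝ → ℝ}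

lemma IsSolution.G_le_of_dirac (hu : IsSolution N p γ (Measure.dirac z) T u) :
    ∀ᵐ y, ∀ s, 0 < s → s < T → G N (y - z) s ≤ u y s := by
  filter_upwards [hu.2.2] with y hy s hs hsT
  refine (ENNReal.ofReal_le_ofReal_iff (hu.2.1 y s)).1 ?_
  rw [(hy s hs hsT).2, hardyRHS, lintegral_dirac]
  exact le_self_add

variable [NeZero N]

theorem not_isSolution_dirac_of_weight_ge {β c : ℝ} (hp : 0 ≤ p) (hc : 0 < c)
    (hcrit : 2 ≤ N * (p - 1) + β) (hT : 0 < T)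
    (hweight : ∀ s ∈ Ioo 0 T, ∀ y, dist y z < √s → y ≠ 0 → c * s ^ (-(β / 2)) ≤ ‖y‖ ^ (-γ)) :
    ¬IsSolution N p γ (Measure.dirac z) T u := by
  intro hu
  obtain ⟨x₀, hx₀⟩ := hu.2.2.exists
  have htop := lintegral_duhamel_eq_top x₀ hp hc hcrit (half_pos hT)
    (fun s hs => hweight s ⟨hs.1, by linarith [hs.2]⟩)
    (hu.G_le_of_dirac.mono fun y hy s hs hst => hy s hs (by linarith))
  exact (hx₀ (T / 2) (half_pos hT) (by linarith)).1 (by rw [hardyRHS, htop, add_top])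

theorem not_isSolution_dirac_zero (hγ0 : 0 < γ) (hγ2 : γ < 2) (hp : 1 + (2 - γ) / N ≤ p)
    (hT : 0 < T) : ¬IsSolution N p γ (Measure.dirac 0) T u := by
  have hN : (0 : ℝ) < N := Nat.cast_pos.2 (NeZero.pos N)
  have hpγ : 2 - γ ≤ N * (p - 1) := (div_le_iff₀' hN).1 (by linarith)
  refine not_isSolution_dirac_of_weight_ge (β := γ) (by nlinarith) one_pos (by linarith) hT
    fun s hs y hy hy0 => ?_
  have hsqrt : √s ^ (-γ) = s ^ (-(γ / 2)) := by
    rw [sqrt_eq_rpow, ← rpow_mul hs.1.le]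
    ring_nf
  rw [one_mul, ← hsqrt]
  exact rpow_le_rpow_of_nonpos (norm_pos_iff.2 hy0) (by simpa using hy.le) (by linarith)

theorem not_isSolution_dirac (hγ0 : 0 < γ) (hp : 1 + 2 / N ≤ p) (hT : 0 < T) :
    ¬IsSolution N p γ (Measure.dirac z) T u := by
  have hN : (0 : ℝ) < N := Nat.cast_pos.2 (NeZero.pos N)
  have hpN : 2 ≤ N * (p - 1) := (div_le_iff₀' hN).1 (by linarith)
  refine not_isSolution_dirac_of_weight_ge (β := 0) (c := (‖z‖ + √T) ^ (-γ)) (by nlinarith)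
    (by positivity) (by linarith) hT fun s hs y hy hy0 => ?_
  have hyT : ‖y‖ ≤ ‖z‖ + √T := by
    have := sqrt_le_sqrt hs.2.le
    rw [dist_eq_norm] at hy
    linarith [norm_le_norm_add_norm_sub' y z]
  rw [zero_div, neg_zero, rpow_zero, mul_one]
  exact rpow_le_rpow_of_nonpos (norm_pos_iff.2 hy0) hyT (by linarith)

end

theorem statement7_general (N : ℕ) (hN : 1 ≤ N) (γ : ℝ)
    (hγ0 : 0 < γ) (hγ2 : γ < 2) :
    (∀ p : ℝ, 1 + (2 - γ) / N ≤ p → ∀ T : ℝ, 0 < T →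
      ¬∃ u : EuclideanSpace ℝ (Fin N) → ℝ → ℝ,
        IsSolution N p γ (Measure.dirac (0 : EuclideanSpace ℝ (Fin N))) T u) ∧
    (∀ p : ℝ, 1 + 2 / N ≤ p → ∀ z : EuclideanSpace ℝ (Fin N), ∀ T : ℝ, 0 < T →
      ¬∃ u : EuclideanSpace ℝ (Fin N) → ℝ → ℝ,
        IsSolution N p γ (Measure.dirac z) T u) := by
  have : NeZero N := ⟨by omega⟩
  exact ⟨fun p hp T hT ⟨_, hu⟩ => not_isSolution_dirac_zero hγ0 hγ2 hp hT hu,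
    fun p hp z T hT ⟨_, hu⟩ => not_isSolution_dirac hγ0 hp hT hu⟩

/-- Remark 2, case θ = 2: nonexistence for Dirac initial data.
(i) If `p ≥ p_γ = 1 + (2-γ)/N`, the Hardy parabolic equation with initial data `δ₀` has no
local-in-time solution. (ii) If `p ≥ p₀ = 1 + 2/N` and `z ∈ ℝ^N`, the Hardy parabolic
equation with initial data `δ_z` has no local-in-time solution. -/
theorem statement7 (N : ℕ) (hN : 1 ≤ N) (γ : ℝ)
    (hγ0 : 0 < γ) (hγ2 : γ < 2) (hγN : γ < N) :
    (∀ p : ℝ, 1 + (2 - γ) / N ≤ p → ∀ T : ℝ, 0 < T →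
      ¬∃ u : EuclideanSpace ℝ (Fin N) → ℝ → ℝ,
        IsSolution N p γ (Measure.dirac (0 : EuclideanSpace ℝ (Fin N))) T u) ∧
    (∀ p : ℝ, 1 + 2 / N ≤ p → ∀ z : EuclideanSpace ℝ (Fin N), ∀ T : ℝ, 0 < T →
      ¬∃ u : EuclideanSpace ℝ (Fin N) → ℝ → ℝ,
        IsSolution N p γ (Measure.dirac z) T u) :=
  statement7_general N hN γ hγ0 hγ2
end

section
/- Let N ≥ 1, p > 1, 0 < γ < min{2, N} and 0 < T < ∞. There exists a constant c_* > 0, depending only on N, with the following property: if μ is a nonnegative Radon measure on ℝ^N, u is a solution of the Hardy parabolic equation ∂_t u − Δu = |x|^{-γ} u^p with initial data μ on ℝ^N × [0,T), z ∈ ℝ^N, and ρ > 0 satisfies (2ρ)² < T, then u(x + z, (2ρ)²) ≥ c_* G(x, ρ²) μ(B(z,ρ)) for almost every x ∈ ℝ^N. -/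
open MeasureTheory Real
open scoped ENNReal NNReal

/-! Only the initial-data term of the Duhamel formula is needed, since the nonlinear term is
nonnegative. For `y ∈ B(z, ρ)` write `x + z - y = x + w` with `‖w‖ ≤ ρ`; then
`‖x + w‖² ≤ 2‖x‖² + 2ρ²`, so the heat kernel at time `(2ρ)²` satisfies
`G(x + w, (2ρ)²) ≥ 4^{-N/2} e^{-1/8} G(x, ρ²)`, and integrating over the ball gives the bound
with `c_* = 4^{-N/2} e^{-1/8}`. -/

lemma sq_norm_add_div_le {E : Type*} [SeminormedAddCommGroup E] {ρ : ℝ} (hρ : 0 < ρ)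
    (x w : E) (hw : ‖w‖ ≤ ρ) :
    ‖x + w‖ ^ 2 / (4 * (2 * ρ) ^ 2) ≤ 1 / 8 + ‖x‖ ^ 2 / (4 * ρ ^ 2) := by
  have hsum : ‖x + w‖ ≤ ‖x‖ + ρ := (norm_add_le x w).trans (by linarith)
  have hsq : ‖x + w‖ ^ 2 ≤ 2 * ‖x‖ ^ 2 + 2 * ρ ^ 2 := by
    nlinarith [norm_nonneg (x + w), sq_nonneg (‖x‖ - ρ)]
  rw [div_le_iff₀ (by positivity)]
  have hexpand :
      (1 / 8 + ‖x‖ ^ 2 / (4 * ρ ^ 2)) * (4 * (2 * ρ) ^ 2) = 2 * ρ ^ 2 + 4 * ‖x‖ ^ 2 := by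
    field_simp; ring
  nlinarith [sq_nonneg ‖x‖]

lemma mul_G_le_G_add {N : ℕ} {ρ : ℝ} (hρ : 0 < ρ) (x w : EuclideanSpace ℝ (Fin N))
    (hw : ‖w‖ ≤ ρ) :
    (4 : ℝ) ^ (-(N : ℝ) / 2) * exp (-(1 / 8)) * G N x (ρ ^ 2) ≤ G N (x + w) ((2 * ρ) ^ 2) := by
  have hprefactor : (4 * π * (2 * ρ) ^ 2) ^ (-(N : ℝ) / 2)
      = (4 : ℝ) ^ (-(N : ℝ) / 2) * (4 * π * ρ ^ 2) ^ (-(N : ℝ) / 2) := by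
    rw [← mul_rpow (by norm_num) (by positivity)]; ring_nf
  have hexp : exp (-(1 / 8)) * exp (-‖x‖ ^ 2 / (4 * ρ ^ 2))
      ≤ exp (-‖x + w‖ ^ 2 / (4 * (2 * ρ) ^ 2)) := by
    rw [← exp_add, exp_le_exp, neg_div, neg_div]
    linarith [sq_norm_add_div_le hρ x w hw]
  unfold G
  rw [hprefactor]
  calc (4 : ℝ) ^ (-(N : ℝ) / 2) * exp (-(1 / 8)) *
        ((4 * π * ρ ^ 2) ^ (-(N : ℝ) / 2) * exp (-‖x‖ ^ 2 / (4 * ρ ^ 2)))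
      = (4 : ℝ) ^ (-(N : ℝ) / 2) * (4 * π * ρ ^ 2) ^ (-(N : ℝ) / 2) *
        (exp (-(1 / 8)) * exp (-‖x‖ ^ 2 / (4 * ρ ^ 2))) := by ring
    _ ≤ _ := by gcongr

lemma mul_measure_ball_le_lintegral_G {N : ℕ} (μ : Measure (EuclideanSpace ℝ (Fin N)))
    (x z : EuclideanSpace ℝ (Fin N)) {ρ : ℝ} (hρ : 0 < ρ) :
    ENNReal.ofReal ((4 : ℝ) ^ (-(N : ℝ) / 2) * exp (-(1 / 8)) * G N x (ρ ^ 2)) *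
        μ (Metric.ball z ρ)
      ≤ ∫⁻ y, ENNReal.ofReal (G N (x + z - y) ((2 * ρ) ^ 2)) ∂μ := by
  rw [← setLIntegral_const]
  refine (setLIntegral_mono' measurableSet_ball fun y hy => ?_).trans
    (setLIntegral_le_lintegral _ _)
  have hw : ‖z - y‖ ≤ ρ := by
    rw [norm_sub_rev, ← dist_eq_norm]
    exact (Metric.mem_ball.1 hy).le
  rw [add_sub_assoc]
  exact ENNReal.ofReal_le_ofReal (mul_G_le_G_add hρ x (z - y) hw)

lemma IsSolution.lintegral_G_le {N : ℕ} {p γ T : ℝ} {μ : Measure (EuclideanSpace ℝ (Fin N))}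
    {u : EuclideanSpace ℝ (Fin N) → ℝ → ℝ} (hu : IsSolution N p γ μ T u) :
    ∀ᵐ x, ∀ t : ℝ, 0 < t → t < T →
      ∫⁻ y, ENNReal.ofReal (G N (x - y) t) ∂μ ≤ ENNReal.ofReal (u x t) := by
  filter_upwards [hu.2.2] with x hx t ht htT
  rw [(hx t ht htT).2]
  exact le_self_add

theorem statement10_general (N : ℕ) :
    ∃ cstar : ℝ, 0 < cstar ∧
      ∀ p γ : ℝ, 1 < p → 0 < γ → γ < 2 → γ < N →
      ∀ T : ℝ, 0 < T →
      ∀ μ : Measure (EuclideanSpace ℝ (Fin N)), IsLocallyFiniteMeasure μ →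
      ∀ u : EuclideanSpace ℝ (Fin N) → ℝ → ℝ, IsSolution N p γ μ T u →
      ∀ (z : EuclideanSpace ℝ (Fin N)) (ρ : ℝ), 0 < ρ → (2 * ρ) ^ 2 < T →
        ∀ᵐ x ∂(volume : Measure (EuclideanSpace ℝ (Fin N))),
          ENNReal.ofReal (cstar * G N x (ρ ^ 2)) * μ (Metric.ball z ρ)
            ≤ ENNReal.ofReal (u (x + z) ((2 * ρ) ^ 2)) := by
  refine ⟨(4 : ℝ) ^ (-(N : ℝ) / 2) * exp (-(1 / 8)), by positivity, ?_⟩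
  intro p γ _ _ _ _ T _ μ _ u hu z ρ hρ hρT
  have hshifted := (measurePreserving_add_right volume z).quasiMeasurePreserving.ae
    hu.lintegral_G_le
  filter_upwards [hshifted] with x hx
  exact (mul_measure_ball_le_lintegral_G μ x z hρ).trans (hx _ (by positivity) hρT)

/-- Lemma 3.1, case θ = 2. There is `c_* > 0` depending only on `N` such
that every solution `u` of the Hardy parabolic equation with initial data `μ` on
`ℝ^N × [0,T)` satisfies `u(x+z, (2ρ)²) ≥ c_* G(x, ρ²) μ(B(z,ρ))` for a.e. `x`, whenever
`(2ρ)² < T`. -/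
theorem statement10 (N : ℕ) (hN : 1 ≤ N) :
    ∃ cstar : ℝ, 0 < cstar ∧
      ∀ p γ : ℝ, 1 < p → 0 < γ → γ < 2 → γ < N →
      ∀ T : ℝ, 0 < T →
      ∀ μ : Measure (EuclideanSpace ℝ (Fin N)), IsLocallyFiniteMeasure μ →
      ∀ u : EuclideanSpace ℝ (Fin N) → ℝ → ℝ, IsSolution N p γ μ T u →
      ∀ (z : EuclideanSpace ℝ (Fin N)) (ρ : ℝ), 0 < ρ → (2 * ρ) ^ 2 < T →
        ∀ᵐ x ∂(volume : Measure (EuclideanSpace ℝ (Fin N))),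
          ENNReal.ofReal (cstar * G N x (ρ ^ 2)) * μ (Metric.ball z ρ)
            ≤ ENNReal.ofReal (u (x + z) ((2 * ρ) ^ 2)) :=
  statement10_general N
end

section
/- Let p > 1 and c₁, c₂ > 0. Define the sequence (a_k)_{k ≥ 1} by a₁ := c₁ and a_{k+1} := c₂ a_k^p (p−1)/(p^k − 1) for k = 1, 2, …. Then there exists a constant β > 0 such that a_k ≥ β^{p^k} for all k = 1, 2, …. -/
/-!
Fix `1 < q < p`. If `a (k + 1) ≥ β ^ q ^ k * a k ^ p` and `a 1 ≥ β`, then `a k ≥ β ^ e k` with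
`e k = (p ^ k - q ^ k) / (p - q)`, because `e (k + 1) = p * e k + q ^ k` exactly. The
recurrence has this shape as soon as `β ^ q ^ k ≤ c₂ (p - 1) / (p ^ k - 1)`. By Bernoulli,
`q ^ k ≥ 1 + k (q - 1)`, so for `β ≤ 1` we get `β ^ q ^ k ≤ β * (β ^ (q - 1)) ^ k`, which is at most
`c₂ (p - 1) / p ^ k` once `β ≤ c₂ (p - 1)` and `β ^ (q - 1) ≤ 1 / p`. Finally
`e k ≤ p ^ k / (p - q)`, so `β ^ (1 / (p - q))` is the required constant.
-/

open Real

lemma rpow_pow_le_mul_rpow_pow {β q : ℝ} (hβ₀ : 0 < β) (hβ₁ : β ≤ 1) (hq : 1 ≤ q)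
    (k : ℕ) : β ^ (q ^ k) ≤ β * (β ^ (q - 1)) ^ k := by
  have bernoulli : 1 + k * (q - 1) ≤ q ^ k := by
    simpa using one_add_mul_le_pow (by linarith : (-2 : ℝ) ≤ q - 1) k
  calc β ^ (q ^ k) ≤ β ^ (1 + k * (q - 1)) :=
        rpow_le_rpow_of_exponent_ge hβ₀ hβ₁ bernoulli
    _ = β * (β ^ (q - 1)) ^ k := by
        rw [rpow_add hβ₀, rpow_one, mul_comm (k : ℝ), rpow_mul hβ₀.le, rpow_natCast]

lemma exists_rpow_pow_le_div_pow_sub_one {p q C : ℝ} (hp : 1 < p) (hq : 1 < q) (hC : 0 < C) :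
    ∃ β : ℝ, 0 < β ∧ β ≤ 1 ∧ ∀ k : ℕ, 1 ≤ k → β ^ (q ^ k) ≤ C / (p ^ k - 1) := by
  set r := p⁻¹ ^ (1 / (q - 1))
  have hr : 0 < r := rpow_pos_of_pos (inv_pos.2 (by linarith)) _
  set β := min C (min 1 r)
  have hβ₀ : 0 < β := lt_min hC (lt_min one_pos hr)
  have hβ₁ : β ≤ 1 := (min_le_right _ _).trans (min_le_left _ _)
  refine ⟨β, hβ₀, hβ₁, fun k hk => ?_⟩
  have hβr : β ^ (q - 1) ≤ p⁻¹ :=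
    calc β ^ (q - 1) ≤ r ^ (q - 1) :=
          rpow_le_rpow hβ₀.le ((min_le_right _ _).trans (min_le_right _ _)) (by linarith)
      _ = p⁻¹ := by
          rw [← rpow_mul (by positivity), one_div_mul_cancel (by linarith), rpow_one]
  have hpk : 0 < p ^ k - 1 := sub_pos.2 (one_lt_pow₀ hp (by omega))
  calc β ^ (q ^ k) ≤ β * (β ^ (q - 1)) ^ k :=
        rpow_pow_le_mul_rpow_pow hβ₀ hβ₁ hq.le k
    _ ≤ C * p⁻¹ ^ k := by gcongr; exact min_le_left _ _
    _ = C / p ^ k := by rw [inv_pow, div_eq_mul_inv]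
    _ ≤ C / (p ^ k - 1) := by gcongr; linarith

lemma rpow_div_sub_le_of_rpow_pow_mul_le {β p q : ℝ} {a : ℕ → ℝ} (hβ : 0 < β) (hp : 0 ≤ p)
    (hpq : p ≠ q) (h₁ : β ≤ a 1)
    (hstep : ∀ k : ℕ, 1 ≤ k → 0 < a k → β ^ (q ^ k) * a k ^ p ≤ a (k + 1)) :
    ∀ k : ℕ, 1 ≤ k → β ^ ((p ^ k - q ^ k) / (p - q)) ≤ a k := by
  have hpq' : p - q ≠ 0 := sub_ne_zero.2 hpq
  intro k hk
  induction k, hk using Nat.le_induction with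
  | base => rwa [pow_one, pow_one, div_self hpq', rpow_one]
  | succ k hk ih =>
    have exponent :
        (p ^ (k + 1) - q ^ (k + 1)) / (p - q) = q ^ k + (p ^ k - q ^ k) / (p - q) * p := by
      field_simp
      ring
    calc β ^ ((p ^ (k + 1) - q ^ (k + 1)) / (p - q))
        = β ^ (q ^ k) * (β ^ ((p ^ k - q ^ k) / (p - q))) ^ p := by
          rw [exponent, rpow_add hβ, rpow_mul hβ.le]
      _ ≤ β ^ (q ^ k) * a k ^ p := by gcongr
      _ ≤ a (k + 1) := hstep k hk ((rpow_pos_of_pos hβ _).trans_le ih)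

/-- inequality (3.19). Let `p > 1`, `c₁, c₂ > 0` and define
`a₁ = c₁`, `a_{k+1} = c₂ a_k^p (p-1)/(p^k - 1)`. Then there is `β > 0` with
`a_k ≥ β^{p^k}` for all `k ≥ 1`. -/
theorem statement16 (p c₁ c₂ : ℝ) (hp : 1 < p) (hc₁ : 0 < c₁) (hc₂ : 0 < c₂)
    (a : ℕ → ℝ) (ha1 : a 1 = c₁)
    (harec : ∀ k : ℕ, 1 ≤ k → a (k + 1) = c₂ * a k ^ p * (p - 1) / (p ^ k - 1)) :
    ∃ β : ℝ, 0 < β ∧ ∀ k : ℕ, 1 ≤ k → β ^ (p ^ k) ≤ a k := by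
  obtain ⟨q, hq, hqp⟩ : ∃ q, 1 < q ∧ q < p := ⟨(p + 1) / 2, by linarith, by linarith⟩
  obtain ⟨β₀, hβ₀, hβ₀₁, hdecay⟩ :=
    exists_rpow_pow_le_div_pow_sub_one hp hq (by nlinarith : 0 < c₂ * (p - 1))
  set β := min β₀ c₁
  have hβ : 0 < β := lt_min hβ₀ hc₁
  have hβ₁ : β ≤ 1 := (min_le_left _ _).trans hβ₀₁
  have hstep (k : ℕ) (hk : 1 ≤ k) (hak : 0 < a k) : β ^ (q ^ k) * a k ^ p ≤ a (k + 1) := by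
    have hpk : 0 < p ^ k - 1 := sub_pos.2 (one_lt_pow₀ hp (by omega))
    calc β ^ (q ^ k) * a k ^ p ≤ c₂ * (p - 1) / (p ^ k - 1) * a k ^ p := by
          gcongr
          exact (rpow_le_rpow hβ.le (min_le_left _ _) (by positivity)).trans (hdecay k hk)
      _ = a (k + 1) := by rw [harec k hk]; ring
  have hbound := rpow_div_sub_le_of_rpow_pow_mul_le hβ (by linarith) hqp.ne'
    ((min_le_right _ _).trans_eq ha1.symm) hstep
  refine ⟨β ^ (1 / (p - q)), rpow_pos_of_pos hβ _, fun k hk => ?_⟩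
  calc (β ^ (1 / (p - q))) ^ (p ^ k) = β ^ (p ^ k / (p - q)) := by
        rw [← rpow_mul hβ.le, one_div_mul_eq_div]
    _ ≤ β ^ ((p ^ k - q ^ k) / (p - q)) := by
        apply rpow_le_rpow_of_exponent_ge hβ hβ₁
        gcongr
        linarith [pow_pos (by linarith : 0 < q) k]
    _ ≤ a k := hbound k hk
end

section
/- Let N ≥ 1, 0 < γ < min{2, N}, p = p_γ := 1 + (2−γ)/N, and c₁, c₂ > 0. Then there exists a constant K > 0, depending only on N, γ, c₁ and c₂, with the following property: if M ≥ 0, ρ > 0 and T > 0 satisfy 5ρ² < T, and w : (ρ², T) → [0, ∞] is a measurable function with w(t) < ∞ for almost every t ∈ (ρ², T) and w(t) ≥ c₁ M t^{−N/2} + c₂ t^{−N/2} ∫_{ρ²}^{t} s^{(N−γ)/2} w(s)^p ds for almost every t ∈ (ρ², T), then M ≤ K [log(T/(5ρ²))]^{−1/(p−1)}. -/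
/-!
Put `F(t) = ∫_{ρ²}^t s^{(N-γ)/2} w(s)^p ds`. For `p = p_γ` the weights balance,
`s^{(N-γ)/2} (s^{-N/2})^p = s⁻¹`, so the inequality yields `F(t') ≥ F(t) + c₂^p log(t'/t) F(t)^p`
and, through its first term, `F(t₀) ≥ (c₁ M)^p log(t₀/ρ²)`. Such superlinear growth in `log t`
blows up within log-time `≲ F(t₀)^{1-p}`, whereas `F` is finite below `T` because `w` is a.e.
finite there; hence `log(T/t₀) ≲ ((c₁ M)^p log(t₀/ρ²))^{1-p}`. Taking `t₀ = √(5ρ²T)` makes both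
logarithms at least `log(T/(5ρ²))/2`.
-/

open MeasureTheory Real Set
open scoped ENNReal NNReal

theorem sum_range_rpow_two_pow_mul_le {α p : ℝ} (hα : 0 < α) (hp : 1 < p) (k : ℕ) :
    ∑ j ∈ Finset.range k, (2 ^ j * α) ^ (1 - p) ≤ α ^ (1 - p) / (1 - 2 ^ (1 - p)) := by
  have hr : (2 : ℝ) ^ (1 - p) < 1 := rpow_lt_one_of_one_lt_of_neg one_lt_two (by linarith)
  have hterm : ∀ j : ℕ, (2 ^ j * α) ^ (1 - p) = α ^ (1 - p) * (2 ^ (1 - p)) ^ j := fun j => by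
    rw [mul_rpow (by positivity) hα.le, ← rpow_natCast, ← rpow_natCast, ← rpow_mul two_pos.le,
      ← rpow_mul two_pos.le, mul_comm (j : ℝ), mul_comm]
  rw [Finset.sum_congr rfl fun j _ => hterm j, ← Finset.mul_sum, Finset.range_eq_Ico]
  calc _ ≤ α ^ (1 - p) * ((2 ^ (1 - p)) ^ 0 / (1 - 2 ^ (1 - p))) :=
        mul_le_mul_of_nonneg_left (geom_sum_Ico_le_of_lt_one (by positivity) hr) (by positivity)
    _ = _ := by rw [pow_zero, mul_one_div]

-- growth at rate `c x^p` in `log t` doubles `x` within log-time `x^(1-p) / c`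
theorem ofReal_two_mul_le_of_growth {F : ℝ → ℝ≥0∞} {c p t x : ℝ} (hc : 0 < c) (hp : 0 ≤ p)
    (ht : 0 < t) (hx : 0 < x) (hFt : ENNReal.ofReal x ≤ F t)
    (hstep : F t + ENNReal.ofReal (c * log (t * exp (x ^ (1 - p) / c) / t)) * F t ^ p
      ≤ F (t * exp (x ^ (1 - p) / c))) :
    ENNReal.ofReal (2 * x) ≤ F (t * exp (x ^ (1 - p) / c)) := by
  rw [mul_div_cancel_left₀ _ ht.ne', log_exp, mul_div_cancel₀ _ hc.ne'] at hstep
  calc ENNReal.ofReal (2 * x)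
      = ENNReal.ofReal x + ENNReal.ofReal (x ^ (1 - p)) * ENNReal.ofReal x ^ p := by
        rw [ENNReal.ofReal_rpow_of_pos hx, ← ENNReal.ofReal_mul (by positivity),
          ← ENNReal.ofReal_add hx.le (by positivity), ← rpow_add hx, sub_add_cancel, rpow_one,
          two_mul]
    _ ≤ F t + ENNReal.ofReal (x ^ (1 - p)) * F t ^ p := by gcongr
    _ ≤ _ := hstep

theorem log_div_le_of_superlinear_growth {F : ℝ → ℝ≥0∞} {a b c p α : ℝ} (ha : 0 < a)
    (hab : a ≤ b) (hc : 0 < c) (hp : 1 < p) (hα : 0 < α) (hFa : ENNReal.ofReal α ≤ F a)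
    (hfin : ∀ t, a ≤ t → t < b → F t ≠ ⊤)
    (hstep : ∀ t t', a ≤ t → t ≤ t' → t' < b →
      F t + ENNReal.ofReal (c * log (t' / t)) * F t ^ p ≤ F t') :
    log (b / a) ≤ α ^ (1 - p) / (c * (1 - 2 ^ (1 - p))) := by
  by_contra! hS
  -- on `[t k, t (k + 1)]` the value of `F` doubles from `2 ^ k * α`; the log-lengths `δ k`
  -- of these intervals are summable, so all `t k` stay below `b' < b`
  set δ : ℕ → ℝ := fun k => (2 ^ k * α) ^ (1 - p) / c
  set t : ℕ → ℝ := fun k => a * exp (∑ j ∈ Finset.range k, δ j)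
  set b' := a * exp (α ^ (1 - p) / (c * (1 - 2 ^ (1 - p))))
  have hb' : b' < b := calc
    b' < a * exp (log (b / a)) := mul_lt_mul_of_pos_left (exp_lt_exp.2 hS) ha
    _ = b := by rw [exp_log (div_pos (ha.trans_le hab) ha), mul_div_cancel₀ _ ha.ne']
  have hat : ∀ k, a ≤ t k := fun k =>
    le_mul_of_one_le_right ha.le (one_le_exp (Finset.sum_nonneg fun j _ => by positivity))
  have htb' : ∀ k, t k ≤ b' := fun k => by
    refine mul_le_mul_of_nonneg_left (exp_le_exp.2 ?_) ha.le
    rw [← Finset.sum_div, div_mul_eq_div_div_swap]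
    exact div_le_div_of_nonneg_right (sum_range_rpow_two_pow_mul_le hα hp k) hc.le
  have ht_succ : ∀ k, t (k + 1) = t k * exp (δ k) := fun k => by
    simp only [t, Finset.sum_range_succ, exp_add, mul_assoc]
  have hdouble : ∀ k, ENNReal.ofReal (2 ^ k * α) ≤ F (t k) := by
    intro k
    induction k with
    | zero => simpa [t] using hFa
    | succ k ih =>
      have ht_le : t k ≤ t (k + 1) := by
        rw [ht_succ]
        exact le_mul_of_one_le_right (ha.le.trans (hat k)) (one_le_exp (by positivity))
      rw [pow_succ, mul_comm _ 2, mul_assoc, ht_succ]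
      exact ofReal_two_mul_le_of_growth hc (by linarith) (ha.trans_le (hat k)) (by positivity) ih
        (ht_succ k ▸ hstep _ _ (hat k) ht_le ((htb' _).trans_lt hb'))
  have hbound : ∀ k : ℕ, 2 ^ k * α ≤ (F b').toReal := fun k =>
    (ENNReal.ofReal_le_iff_le_toReal (hfin b' ((hat 0).trans (htb' 0)) hb')).1 <|
      (hdouble k).trans <| le_self_add.trans (hstep _ _ (hat k) (htb' k) hb')
  obtain ⟨k, hk⟩ := pow_unbounded_of_one_lt ((F b').toReal / α) one_lt_two
  exact (hbound k).not_gt ((div_lt_iff₀ hα).1 hk)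

theorem le_mul_rpow_of_le_rpow_one_sub {x ℓ B p : ℝ} (hx : 0 < x) (hℓ : 0 < ℓ) (hB : 0 < B)
    (hp : 1 < p) (h : ℓ ≤ (x ^ p * ℓ) ^ (1 - p) / B) :
    x ≤ B ^ (-1 / (p * (p - 1))) * ℓ ^ (-1 / (p - 1)) := by
  have hp' : 0 < p * (p - 1) := by nlinarith
  have hlog := log_le_log hℓ h
  rw [log_div (by positivity) hB.ne', log_rpow (by positivity), log_mul (by positivity) hℓ.ne',
    log_rpow hx] at hlog
  rw [← log_le_log_iff hx (by positivity), log_mul (by positivity) (by positivity),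
    log_rpow hB, log_rpow hℓ,
    show -1 / (p * (p - 1)) * log B + -1 / (p - 1) * log ℓ
      = (-log B - p * log ℓ) / (p * (p - 1)) by field_simp; ring, le_div_iff₀ hp']
  nlinarith

theorem exists_mem_Ioo_half_log_le {a a' T : ℝ} (ha : 0 < a) (haa' : a ≤ a') (ha'T : a' < T) :
    ∃ t₀ ∈ Ioo a T, log (T / a') / 2 ≤ log (t₀ / a) ∧ log (T / a') / 2 ≤ log (T / t₀) := by
  have ha' : 0 < a' := ha.trans_le haa'
  have hT : 0 < T := ha'.trans ha'T
  have hlog : log √(a' * T) = (log a' + log T) / 2 := by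
    rw [log_sqrt (by positivity), log_mul ha'.ne' hT.ne']
  have ha't₀ : a' < √(a' * T) := by
    rw [lt_sqrt ha'.le]
    nlinarith
  have ht₀T : √(a' * T) < T := by
    rw [sqrt_lt' hT]
    nlinarith
  have ht₀ : 0 < √(a' * T) := ha'.trans ha't₀
  refine ⟨√(a' * T), ⟨haa'.trans_lt ha't₀, ht₀T⟩, ?_, ?_⟩
  · rw [log_div hT.ne' ha'.ne', log_div ht₀.ne' ha.ne', hlog]
    linarith [log_le_log ha haa']
  · rw [log_div hT.ne' ha'.ne', log_div hT.ne' ht₀.ne', hlog]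
    linarith

theorem setLIntegral_Ioo_ofReal_inv {a b : ℝ} (ha : 0 < a) (hab : a ≤ b) :
    ∫⁻ s in Ioo a b, ENNReal.ofReal s⁻¹ = ENNReal.ofReal (log (b / a)) := by
  have hint : IntegrableOn (fun s : ℝ => s⁻¹) (Ioo a b) :=
    ((continuousOn_inv₀.mono fun x hx => (ha.trans_le hx.1).ne').integrableOn_compact
      isCompact_Icc).mono_set Ioo_subset_Icc_self
  rw [← ofReal_integral_eq_lintegral_ofReal hint, ← integral_Ioc_eq_integral_Ioo,
    ← intervalIntegral.integral_of_le hab, integral_inv_of_pos ha (ha.trans_le hab)]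
  filter_upwards [ae_restrict_mem measurableSet_Ioo] with x hx
  exact inv_nonneg.2 (ha.trans hx.1).le

theorem ofReal_mul_log_le_setLIntegral_rpow {w : ℝ → ℝ≥0∞} {G : ℝ≥0∞} {c e f p t t' : ℝ}
    (hc : 0 < c) (hp : 0 ≤ p) (hef : e + f * p = -1) (ht : 0 < t) (htt' : t ≤ t')
    (hw : ∀ᵐ s ∂volume.restrict (Ioo t t'), ENNReal.ofReal (c * s ^ f) * G ≤ w s) :
    ENNReal.ofReal (c ^ p * log (t' / t)) * G ^ p
      ≤ ∫⁻ s in Ioo t t', ENNReal.ofReal (s ^ e) * w s ^ p := by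
  have hpoint : ∀ s ∈ Ioo t t', ENNReal.ofReal (c ^ p) * G ^ p * ENNReal.ofReal s⁻¹
      = ENNReal.ofReal (s ^ e) * (ENNReal.ofReal (c * s ^ f) * G) ^ p := fun s hs => by
    have hs0 : 0 < s := ht.trans hs.1
    rw [ENNReal.mul_rpow_of_nonneg _ _ hp, ENNReal.ofReal_rpow_of_nonneg (by positivity) hp,
      mul_rpow hc.le (by positivity), ← rpow_mul hs0.le, ← mul_assoc,
      ← ENNReal.ofReal_mul (by positivity), mul_left_comm, ← rpow_add hs0, hef, rpow_neg_one,
      ENNReal.ofReal_mul (by positivity)]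
    ring
  calc ENNReal.ofReal (c ^ p * log (t' / t)) * G ^ p
      = ∫⁻ s in Ioo t t', ENNReal.ofReal (c ^ p) * G ^ p * ENNReal.ofReal s⁻¹ := by
        rw [lintegral_const_mul _ measurable_inv.ennreal_ofReal,
          setLIntegral_Ioo_ofReal_inv ht htt', ENNReal.ofReal_mul (by positivity)]
        ring
    _ = ∫⁻ s in Ioo t t', ENNReal.ofReal (s ^ e) * (ENNReal.ofReal (c * s ^ f) * G) ^ p :=
        setLIntegral_congr_fun measurableSet_Ioo hpoint
    _ ≤ ∫⁻ s in Ioo t t', ENNReal.ofReal (s ^ e) * w s ^ p := by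
        refine lintegral_mono_ae ?_
        filter_upwards [hw] with s hs
        gcongr

theorem ne_top_of_ae_mul_le {F g w : ℝ → ℝ≥0∞} {a T t : ℝ} (hF : Monotone F)
    (hg : ∀ s ∈ Ioo a T, g s ≠ 0) (hfin : ∀ᵐ s ∂volume.restrict (Ioo a T), w s ≠ ⊤)
    (hw : ∀ᵐ s ∂volume.restrict (Ioo a T), g s * F s ≤ w s) (haT : a < T) (htT : t < T) :
    F t ≠ ⊤ := by
  have hpos : volume (Ioo (max a t) T) ≠ 0 := by simp [haT, htT]
  obtain ⟨s, hs, hws, hgFs⟩ := Measure.exists_mem_of_measure_ne_zero_of_ae hpos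
    (ae_restrict_of_ae_restrict_of_subset (Ioo_subset_Ioo_left (le_max_left a t))
      (hfin.and hw))
  have hFs : F s ≠ ⊤ := fun h => hws <| top_le_iff.1 <| hgFs.trans' <|
    by rw [h, ENNReal.mul_top (hg s ⟨(le_max_left a t).trans_lt hs.1, hs.2⟩)]
  exact ne_top_of_le_ne_top hFs (hF ((le_max_right a t).trans hs.1.le))

noncomputable def weightedPowIntegral (e p : ℝ) (w : ℝ → ℝ≥0∞) (a t : ℝ) : ℝ≥0∞ :=
  ∫⁻ s in Ioo a t, ENNReal.ofReal (s ^ e) * w s ^ p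

theorem weightedPowIntegral_mono (e p : ℝ) (w : ℝ → ℝ≥0∞) (a : ℝ) :
    Monotone (weightedPowIntegral e p w a) := fun _ _ h =>
  lintegral_mono_set (Ioo_subset_Ioo_right h)

theorem weightedPowIntegral_add_setLIntegral_le {e p a t t' : ℝ} (w : ℝ → ℝ≥0∞) (hat : a ≤ t)
    (htt' : t ≤ t') :
    weightedPowIntegral e p w a t + ∫⁻ s in Ioo t t', ENNReal.ofReal (s ^ e) * w s ^ p
      ≤ weightedPowIntegral e p w a t' := by
  rw [weightedPowIntegral, weightedPowIntegral, ← lintegral_union measurableSet_Ioo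
    (disjoint_left.2 fun _ h₁ h₂ => lt_asymm h₁.2 h₂.1)]
  exact lintegral_mono_set (union_subset (Ioo_subset_Ioo_right htt') (Ioo_subset_Ioo_left hat))

theorem weightedPowIntegral_growth {w : ℝ → ℝ≥0∞} {c e f p a T t t' : ℝ} (hc : 0 < c)
    (hp : 0 ≤ p) (hef : e + f * p = -1) (ht : 0 < t) (hat : a ≤ t) (htt' : t ≤ t')
    (ht'T : t' ≤ T)
    (hw : ∀ᵐ s ∂volume.restrict (Ioo a T),
      ENNReal.ofReal (c * s ^ f) * weightedPowIntegral e p w a s ≤ w s) :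
    weightedPowIntegral e p w a t
        + ENNReal.ofReal (c ^ p * log (t' / t)) * weightedPowIntegral e p w a t ^ p
      ≤ weightedPowIntegral e p w a t' := by
  have hw' : ∀ᵐ s ∂volume.restrict (Ioo t t'),
      ENNReal.ofReal (c * s ^ f) * weightedPowIntegral e p w a t ≤ w s := by
    filter_upwards [ae_restrict_of_ae_restrict_of_subset (Ioo_subset_Ioo hat ht'T) hw,
      ae_restrict_mem measurableSet_Ioo] with s hs hst
    exact (mul_le_mul_right (weightedPowIntegral_mono e p w a hst.1.le) _).trans hs
  exact (add_le_add le_rfl (ofReal_mul_log_le_setLIntegral_rpow hc hp hef ht htt' hw')).trans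
    (weightedPowIntegral_add_setLIntegral_le w hat htt')

theorem log_div_le_of_ae_le {w : ℝ → ℝ≥0∞} {c₁ c₂ e f p a t₀ T : ℝ} (hc₁ : 0 < c₁)
    (hc₂ : 0 < c₂) (hp : 1 < p) (hef : e + f * p = -1) (ha : 0 < a) (hat₀ : a < t₀)
    (ht₀T : t₀ < T) (hfin : ∀ᵐ s ∂volume.restrict (Ioo a T), w s ≠ ⊤)
    (hlow : ∀ᵐ s ∂volume.restrict (Ioo a T), ENNReal.ofReal (c₁ * s ^ f) ≤ w s)
    (hrec : ∀ᵐ s ∂volume.restrict (Ioo a T),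
      ENNReal.ofReal (c₂ * s ^ f) * weightedPowIntegral e p w a s ≤ w s) :
    log (T / t₀) ≤ (c₁ ^ p * log (t₀ / a)) ^ (1 - p) / (c₂ ^ p * (1 - 2 ^ (1 - p))) := by
  have ht₀ : 0 < t₀ := ha.trans hat₀
  refine log_div_le_of_superlinear_growth (F := weightedPowIntegral e p w a) ht₀ ht₀T.le
    (by positivity) hp (mul_pos (by positivity) (log_pos ((one_lt_div ha).2 hat₀))) ?_ ?_ ?_
  · have hlow' : ∀ᵐ s ∂volume.restrict (Ioo a t₀), ENNReal.ofReal (c₁ * s ^ f) * 1 ≤ w s :=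
      (ae_restrict_of_ae_restrict_of_subset (Ioo_subset_Ioo_right ht₀T.le) hlow).mono
        fun _ h => by rwa [mul_one]
    have := ofReal_mul_log_le_setLIntegral_rpow hc₁ (by linarith) hef ha hat₀.le hlow'
    rwa [ENNReal.one_rpow, mul_one] at this
  · exact fun t _ htT => ne_top_of_ae_mul_le (weightedPowIntegral_mono e p w a)
      (fun s hs => (ENNReal.ofReal_pos.2 (mul_pos hc₂ (rpow_pos_of_pos (ha.trans hs.1) f))).ne')
      hfin hrec (hat₀.trans ht₀T) htT
  · exact fun t t' ht htt' ht'T => weightedPowIntegral_growth hc₂ (by linarith) hef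
      (ht₀.trans_le ht) (hat₀.le.trans ht) htt' ht'T.le hrec

theorem statement17_general (N : ℕ) (γ : ℝ)
    (hγ0 : 0 < γ) (hγ2 : γ < 2) (hγN : γ < N) (p : ℝ) (hp : p = 1 + (2 - γ) / N)
    (c₁ c₂ : ℝ) (hc₁ : 0 < c₁) (hc₂ : 0 < c₂) :
    ∃ K : ℝ, 0 < K ∧
      ∀ M ρ T : ℝ, 0 ≤ M → 0 < ρ → 5 * ρ ^ 2 < T →
      ∀ w : ℝ → ℝ≥0∞, Measurable w →
      (∀ᵐ t ∂(volume.restrict (Set.Ioo (ρ ^ 2) T)), w t ≠ ⊤) →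
      (∀ᵐ t ∂(volume.restrict (Set.Ioo (ρ ^ 2) T)),
        ENNReal.ofReal (c₁ * M * t ^ (-(N : ℝ) / 2)) +
            ENNReal.ofReal (c₂ * t ^ (-(N : ℝ) / 2)) *
              ∫⁻ s in Set.Ioo (ρ ^ 2) t, ENNReal.ofReal (s ^ (((N : ℝ) - γ) / 2)) * w s ^ p
          ≤ w t) →
      M ≤ K * Real.log (T / (5 * ρ ^ 2)) ^ (-1 / (p - 1)) := by
  have hN : (0 : ℝ) < N := hγ0.trans hγN
  have hp1 : 1 < p := by linarith [div_pos (sub_pos.2 hγ2) hN]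
  have hef : ((N : ℝ) - γ) / 2 + (-(N : ℝ) / 2) * p = -1 := by
    rw [hp]; field_simp; ring
  set B := c₂ ^ p * (1 - 2 ^ (1 - p))
  have hB : 0 < B := mul_pos (by positivity)
    (sub_pos.2 (rpow_lt_one_of_one_lt_of_neg one_lt_two (by linarith)))
  refine ⟨c₁⁻¹ * B ^ (-1 / (p * (p - 1))) * 2 ^ (1 / (p - 1)), by positivity, ?_⟩
  intro M ρ T hM hρ hT w _ hfin hw
  set L := log (T / (5 * ρ ^ 2))
  have hL : 0 < L := log_pos ((one_lt_div (by positivity)).2 hT)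
  rcases hM.eq_or_lt with rfl | hM
  · positivity
  have hρ2 : 0 < ρ ^ 2 := by positivity
  obtain ⟨t₀, ⟨hρt₀, ht₀T⟩, hlog₁, hlog₂⟩ := exists_mem_Ioo_half_log_le hρ2 (by linarith) hT
  have hlife := log_div_le_of_ae_le (mul_pos hc₁ hM) hc₂ hp1 hef hρ2 hρt₀ ht₀T hfin
    (hw.mono fun _ h => le_self_add.trans h) (hw.mono fun _ h => le_add_self.trans h)
  have hM' : c₁ * M ≤ B ^ (-1 / (p * (p - 1))) * (L / 2) ^ (-1 / (p - 1)) := by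
    refine le_mul_rpow_of_le_rpow_one_sub (mul_pos hc₁ hM) (half_pos hL) hB hp1 ?_
    refine hlog₂.trans (hlife.trans ?_)
    gcongr ?_ / B
    exact rpow_le_rpow_of_nonpos (by positivity) (by gcongr) (by linarith)
  calc M = c₁⁻¹ * (c₁ * M) := by field_simp
    _ ≤ c₁⁻¹ * (B ^ (-1 / (p * (p - 1))) * (L / 2) ^ (-1 / (p - 1))) := by gcongr
    _ = _ := by
      rw [div_rpow hL.le two_pos.le, div_eq_mul_inv _ (2 ^ _), ← rpow_neg two_pos.le,
        show -(-1 / (p - 1)) = 1 / (p - 1) by ring]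
      ring

/-- the iteration argument in the proof of (1.6), case θ = 2,
p = p_γ = 1 + (2-γ)/N. If `w` satisfies the integral inequality
`w(t) ≥ c₁ M t^{-N/2} + c₂ t^{-N/2} ∫_{ρ²}^t s^{(N-γ)/2} w(s)^p ds` a.e. on `(ρ², T)`
and is a.e. finite there, then `M ≤ K [log(T/(5ρ²))]^{-1/(p-1)}`. -/
theorem statement17 (N : ℕ) (hN : 1 ≤ N) (γ : ℝ)
    (hγ0 : 0 < γ) (hγ2 : γ < 2) (hγN : γ < N) (p : ℝ) (hp : p = 1 + (2 - γ) / N)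
    (c₁ c₂ : ℝ) (hc₁ : 0 < c₁) (hc₂ : 0 < c₂) :
    ∃ K : ℝ, 0 < K ∧
      ∀ M ρ T : ℝ, 0 ≤ M → 0 < ρ → 5 * ρ ^ 2 < T →
      ∀ w : ℝ → ℝ≥0∞, Measurable w →
      (∀ᵐ t ∂(volume.restrict (Set.Ioo (ρ ^ 2) T)), w t ≠ ⊤) →
      (∀ᵐ t ∂(volume.restrict (Set.Ioo (ρ ^ 2) T)),
        ENNReal.ofReal (c₁ * M * t ^ (-(N : ℝ) / 2)) +
            ENNReal.ofReal (c₂ * t ^ (-(N : ℝ) / 2)) *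
              ∫⁻ s in Set.Ioo (ρ ^ 2) t, ENNReal.ofReal (s ^ (((N : ℝ) - γ) / 2)) * w s ^ p
          ≤ w t) →
      M ≤ K * Real.log (T / (5 * ρ ^ 2)) ^ (-1 / (p - 1)) :=
  statement17_general N γ hγ0 hγ2 hγN p hp c₁ c₂ hc₁ hc₂
end
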